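/- arXiv:2206.01866 — 2 statements merged into one kernel-verified Lean document; each statement's English description precedes it below -/
import Mathlib

section
/- (Performance guarantee of RoKDeePC) Let Ȳ ∈ ℝ^{pN×H}, K̄ ∈ ℝ^{H×H} symmetric PSD, γ > 0, Q ⪰ 0, r ∈ ℝ^{pN}, k̄ ∈ ℝ^H, and let y_prd = Ȳ(K̄+γI)^{-1}k̄. Suppose the realized output y_sys satisfies ‖y_sys − y_prd‖_Q ≤ β_e, and λ_k ≥ 0 satisfies λ_k² I ⪰ (K̄+γI)^{-1}ȲᵀQȲ(K̄+γI)^{-1}. Then for every g ∈ ℝ^H and constant c_u ∈ ℝ: c_u + ‖Ȳg − r‖_Q + λ_k‖(K̄+γI)g − k̄‖ ≥ c_u + ‖y_sys − r‖_Q − β_e. In particular, the realized cost c_u + ‖y_sys − r‖_Q is at most the optimization cost plus β_e. -/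
/-! With `ε = k̄ - (K̄ + γI) g`, the prediction gap is `y_prd - Ȳ g = Ȳ (K̄ + γI)⁻¹ ε`, and the
matrix inequality on `λ_k` bounds its `Q`-seminorm by `λ_k ‖ε‖`. The claim is then the triangle
inequality `‖y_sys - r‖_Q ≤ ‖y_sys - y_prd‖_Q + ‖y_prd - Ȳ g‖_Q + ‖Ȳ g - r‖_Q`, where the first
term is at most `β_e`. -/

open Matrix BigOperators

noncomputable def vnorm {n : ℕ} (x : Fin n → ℝ) : ℝ := Real.sqrt (∑ i, x i ^ 2)

noncomputable def qnorm {n : ℕ} (Q : Matrix (Fin n) (Fin n) ℝ) (v : Fin n → ℝ) : ℝ :=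
  Real.sqrt (v ⬝ᵥ Q.mulVec v)

section Norms

variable {m n : ℕ}

lemma vnorm_eq_norm_toLp (x : Fin n → ℝ) : vnorm x = ‖WithLp.toLp 2 x‖ := by
  simp [vnorm, EuclideanSpace.norm_eq, sq_abs]

lemma vnorm_sub_comm (x y : Fin n → ℝ) : vnorm (x - y) = vnorm (y - x) := by
  simp only [vnorm_eq_norm_toLp, WithLp.toLp_sub, norm_sub_rev]

lemma vnorm_eq_sqrt_dotProduct (x : Fin n → ℝ) : vnorm x = √(x ⬝ᵥ x) := by
  simp only [vnorm, dotProduct, sq]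

open scoped MatrixOrder in
lemma qnorm_eq_vnorm_sqrt_mulVec {Q : Matrix (Fin n) (Fin n) ℝ} (hQ : Q.PosSemidef)
    (v : Fin n → ℝ) : qnorm Q v = vnorm (CFC.sqrt Q *ᵥ v) := by
  have hsqrt : CFC.sqrt Q * CFC.sqrt Q = Q := CFC.sqrt_mul_sqrt_self Q hQ.nonneg
  have hsymm : (CFC.sqrt Q)ᵀ = CFC.sqrt Q :=
    (isHermitian_iff_isSymm.mp (CFC.sqrt_nonneg Q).posSemidef.isHermitian).eq
  have hQv : Q *ᵥ v = CFC.sqrt Q *ᵥ (CFC.sqrt Q *ᵥ v) := by rw [mulVec_mulVec, hsqrt]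
  rw [qnorm, hQv, dotProduct_mulVec, vnorm_eq_sqrt_dotProduct, ← vecMul_transpose, hsymm]

lemma qnorm_sub_le_add {Q : Matrix (Fin n) (Fin n) ℝ} (hQ : Q.PosSemidef)
    (a b c : Fin n → ℝ) : qnorm Q (a - c) ≤ qnorm Q (a - b) + qnorm Q (b - c) := by
  simp only [qnorm_eq_vnorm_sqrt_mulVec hQ, mulVec_sub, vnorm_eq_norm_toLp, WithLp.toLp_sub]
  exact norm_sub_le_norm_sub_add_norm_sub _ _ _

lemma qnorm_mulVec_le_of_posSemidef {Q : Matrix (Fin m) (Fin m) ℝ} {B : Matrix (Fin m) (Fin n) ℝ}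
    {c : ℝ} (hc : 0 ≤ c) (hB : (c ^ 2 • (1 : Matrix (Fin n) (Fin n) ℝ) - Bᵀ * Q * B).PosSemidef)
    (x : Fin n → ℝ) : qnorm Q (B *ᵥ x) ≤ c * vnorm x := by
  have hquad : B *ᵥ x ⬝ᵥ Q *ᵥ (B *ᵥ x) ≤ c ^ 2 * (x ⬝ᵥ x) := by
    have h := hB.dotProduct_mulVec_nonneg x
    simp only [star_trivial, sub_mulVec, dotProduct_sub, smul_mulVec, one_mulVec,
      dotProduct_smul, smul_eq_mul, ← mulVec_mulVec] at h
    rw [dotProduct_mulVec x, vecMul_transpose] at h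
    linarith
  calc qnorm Q (B *ᵥ x) ≤ √(c ^ 2 * (x ⬝ᵥ x)) := Real.sqrt_le_sqrt hquad
    _ = c * vnorm x := by
      rw [Real.sqrt_mul (sq_nonneg c), Real.sqrt_sq hc, vnorm_eq_sqrt_dotProduct]

end Norms

lemma posDef_add_smul_one {n : Type*} [Fintype n] [DecidableEq n] {K : Matrix n n ℝ}
    (hK : K.PosSemidef) {γ : ℝ} (hγ : 0 < γ) : (K + γ • (1 : Matrix n n ℝ)).PosDef :=
  PosDef.posSemidef_add hK (PosDef.one.smul hγ)

lemma mulVec_inv_mulVec_sub_mulVec {m n : Type*} [Fintype n] [DecidableEq n] {R : Type*}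
    [CommRing R] {A : Matrix n n R} (hA : IsUnit A.det) (Y : Matrix m n R) (k g : n → R) :
    Y *ᵥ (A⁻¹ *ᵥ k) - Y *ᵥ g = (Y * A⁻¹) *ᵥ (k - A *ᵥ g) := by
  simp only [mulVec_sub, mulVec_mulVec, Matrix.mul_assoc, nonsing_inv_mul A hA, Matrix.mul_one]

/-- Performance guarantee of RoKDeePC: the realized cost is bounded by the optimization
cost plus the prediction error bound β_e. -/
theorem stmt8 {p H : ℕ} (Yb : Matrix (Fin p) (Fin H) ℝ) (Kb : Matrix (Fin H) (Fin H) ℝ)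
    (hKb : Kb.PosSemidef) (γ : ℝ) (hγ : 0 < γ)
    (Q : Matrix (Fin p) (Fin p) ℝ) (hQ : Q.PosSemidef)
    (r : Fin p → ℝ) (kb : Fin H → ℝ) (ysys : Fin p → ℝ) (βe lk : ℝ) (hlk : 0 ≤ lk)
    (herr : qnorm Q (ysys -
      Yb.mulVec ((Kb + γ • (1 : Matrix (Fin H) (Fin H) ℝ))⁻¹.mulVec kb)) ≤ βe)
    (hdom : (lk ^ 2 • (1 : Matrix (Fin H) (Fin H) ℝ) -
      (Kb + γ • (1 : Matrix (Fin H) (Fin H) ℝ))⁻¹ * Yb.transpose * Q * Yb *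
        (Kb + γ • (1 : Matrix (Fin H) (Fin H) ℝ))⁻¹).PosSemidef) :
    ∀ (g : Fin H → ℝ) (cu : ℝ),
      cu + qnorm Q (ysys - r) - βe ≤
      cu + qnorm Q (Yb.mulVec g - r) +
        lk * vnorm ((Kb + γ • (1 : Matrix (Fin H) (Fin H) ℝ)).mulVec g - kb) := by
  intro g cu
  set A := Kb + γ • (1 : Matrix (Fin H) (Fin H) ℝ)
  have hA : A.PosDef := posDef_add_smul_one hKb hγ
  have hAinv_symm : (A⁻¹)ᵀ = A⁻¹ := (isHermitian_iff_isSymm.mp hA.inv.isHermitian).eq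
  set yprd := Yb *ᵥ (A⁻¹ *ᵥ kb)
  have hprd : qnorm Q (yprd - Yb *ᵥ g) ≤ lk * vnorm (A *ᵥ g - kb) := by
    rw [mulVec_inv_mulVec_sub_mulVec ((isUnit_iff_isUnit_det A).mp hA.isUnit),
      vnorm_sub_comm]
    refine qnorm_mulVec_le_of_posSemidef hlk ?_ _
    simpa only [transpose_mul, hAinv_symm, Matrix.mul_assoc] using hdom
  have h₁ := qnorm_sub_le_add hQ ysys yprd r
  have h₂ := qnorm_sub_le_add hQ yprd (Yb *ᵥ g) r
  linarith
end

section
/- (Proposition 1, equivalence part, unconstrained case) Let Ŷ ∈ ℝ^{p×H}, V ∈ ℝ^{H×H}, r ∈ ℝ^p, v ∈ ℝ^H, Q ⪰ 0, λ_g, λ'_k > 0, and let g* minimize c_q(g) = ‖Ŷg − r‖_Q² + λ_g‖g‖² + λ'_k‖Vg − v‖² over ℝ^H. Suppose Ŷg* ≠ r, Vg* ≠ v, and g* ≠ 0. Define λ_k = λ'_k‖Vg* − v‖ / ‖Ŷg* − r‖_Q, and choose ρ₁ ≥ 0, ρ₂ ≥ 0 with λ_k ρ₁ ‖g*‖/√(‖g*‖²+1)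 + ρ₂ = λ_g‖g*‖/‖Ŷg* − r‖_Q. Then g* also minimizes c(g) = ‖Ŷg − r‖_Q + λ_k ρ₁√(‖g‖²+1) + ρ₂‖g‖ + λ_k‖Vg − v‖ over ℝ^H. -/
/-!
At the minimizer `g*` of the quadratic cost `c_q` the directional derivative vanishes: for every
direction `d`, `⟪Ŷg* - r, Ŷd⟫_Q + λ_g ⟪g*, d⟫ + λ'_k ⟪Vg* - v, Vd⟫ = 0`. Each of the four terms of
`c` is the norm of an affine function of `g` (with `√(‖g‖² + 1) = ‖(g, 1)‖`), so it lies above its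
tangent `‖u + w‖ ≥ ‖u‖ + ⟪u, w⟫ / ‖u‖`. Adding these tangent bounds with the weights of `c`, the
choice of `λ_k`, `ρ₁`, `ρ₂` makes the linear terms add up to that directional derivative divided by
`‖Ŷg* - r‖_Q`, i.e. to zero. Writing `Q = Sᵀ S` turns `‖·‖_Q` into a Euclidean norm.
-/

open Matrix BigOperators

open RealInnerProductSpace

section InnerProductSpace

variable {E F G : Type*} [NormedAddCommGroup E] [InnerProductSpace ℝ E]
  [NormedAddCommGroup F] [InnerProductSpace ℝ F] [NormedAddCommGroup G] [InnerProductSpace ℝ G]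

lemma norm_add_smul_sq (u w : E) (t : ℝ) :
    ‖u + t • w‖ ^ 2 = ‖u‖ ^ 2 + 2 * t * ⟪u, w⟫ + t ^ 2 * ‖w‖ ^ 2 := by
  rw [norm_add_sq_real, real_inner_smul_right, norm_smul, mul_pow, Real.norm_eq_abs, sq_abs]
  ring

lemma norm_add_inner_div_norm_le_norm_add {u : E} (hu : u ≠ 0) (w : E) :
    ‖u‖ + ⟪u, w⟫ / ‖u‖ ≤ ‖u + w‖ := by
  have hu' : 0 < ‖u‖ := norm_pos_iff.mpr hu
  have hsplit : ‖u‖ + ⟪u, w⟫ / ‖u‖ = ⟪u, u + w⟫ / ‖u‖ := by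
    rw [inner_add_right, real_inner_self_eq_norm_sq]
    field_simp
  rw [hsplit, div_le_iff₀' hu']
  exact real_inner_le_norm u (u + w)

lemma sqrt_norm_sq_add_one_add_inner_div_le (u w : E) :
    √(‖u‖ ^ 2 + 1) + ⟪u, w⟫ / √(‖u‖ ^ 2 + 1) ≤ √(‖u + w‖ ^ 2 + 1) := by
  have key := norm_add_inner_div_norm_le_norm_add (u := WithLp.toLp 2 (u, (1 : ℝ)))
    (by simp) (WithLp.toLp 2 (w, 0))
  simpa [WithLp.prod_norm_eq_of_L2] using key

variable (Y : E →ₗ[ℝ] F) (V : E →ₗ[ℝ] G) (r : F) (v : G)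

def quadCost (lg lk' : ℝ) (x : E) : ℝ :=
  ‖Y x - r‖ ^ 2 + lg * ‖x‖ ^ 2 + lk' * ‖V x - v‖ ^ 2

noncomputable def normCost (lk ρ₁ ρ₂ : ℝ) (x : E) : ℝ :=
  ‖Y x - r‖ + lk * ρ₁ * √(‖x‖ ^ 2 + 1) + ρ₂ * ‖x‖ + lk * ‖V x - v‖

lemma quadCost_add_smul (lg lk' : ℝ) (x d : E) (t : ℝ) :
    quadCost Y V r v lg lk' (x + t • d) = quadCost Y V r v lg lk' x +
      2 * t * (⟪Y x - r, Y d⟫ + lg * ⟪x, d⟫ + lk' * ⟪V x - v, V d⟫) +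
      t ^ 2 * (‖Y d‖ ^ 2 + lg * ‖d‖ ^ 2 + lk' * ‖V d‖ ^ 2) := by
  have hY : Y (x + t • d) - r = (Y x - r) + t • Y d := by rw [map_add, map_smul]; abel
  have hV : V (x + t • d) - v = (V x - v) + t • V d := by rw [map_add, map_smul]; abel
  simp only [quadCost, hY, hV, norm_add_smul_sq]
  ring

lemma inner_gradient_quadCost_eq_zero {lg lk' : ℝ} {xs : E}
    (hmin : ∀ x, quadCost Y V r v lg lk' xs ≤ quadCost Y V r v lg lk' x) (d : E) :
    ⟪Y xs - r, Y d⟫ + lg * ⟪xs, d⟫ + lk' * ⟪V xs - v, V d⟫ = 0 := by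
  set K := ⟪Y xs - r, Y d⟫ + lg * ⟪xs, d⟫ + lk' * ⟪V xs - v, V d⟫
  set M := ‖Y d‖ ^ 2 + lg * ‖d‖ ^ 2 + lk' * ‖V d‖ ^ 2
  have hdiscr : discrim M (2 * K) 0 ≤ 0 := discrim_le_zero fun t => by
    have := hmin (xs + t • d)
    rw [quadCost_add_smul] at this
    linarith
  rw [discrim] at hdiscr
  nlinarith

theorem normCost_le_of_forall_quadCost_le {lg lk' lk ρ₁ ρ₂ : ℝ} {xs : E}
    (hlk' : 0 ≤ lk') (hρ₁ : 0 ≤ ρ₁) (hρ₂ : 0 ≤ ρ₂)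
    (he : Y xs ≠ r) (hf : V xs ≠ v) (hxs : xs ≠ 0)
    (hlk : lk = lk' * ‖V xs - v‖ / ‖Y xs - r‖)
    (hρ : lk * ρ₁ * ‖xs‖ / √(‖xs‖ ^ 2 + 1) + ρ₂ = lg * ‖xs‖ / ‖Y xs - r‖)
    (hmin : ∀ x, quadCost Y V r v lg lk' xs ≤ quadCost Y V r v lg lk' x) (x : E) :
    normCost Y V r v lk ρ₁ ρ₂ xs ≤ normCost Y V r v lk ρ₁ ρ₂ x := by
  set d := x - xs
  have hx : x = xs + d := (add_sub_cancel xs x).symm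
  have he' : Y xs - r ≠ 0 := sub_ne_zero.mpr he
  have hf' : V xs - v ≠ 0 := sub_ne_zero.mpr hf
  have ha := norm_pos_iff.mpr he'
  have hb := norm_pos_iff.mpr hf'
  have hn := norm_pos_iff.mpr hxs
  have hlk0 : 0 ≤ lk := hlk ▸ by positivity
  have hgrad := inner_gradient_quadCost_eq_zero Y V r v hmin d
  have hY : Y x - r = (Y xs - r) + Y d := by rw [hx, map_add]; abel
  have hV : V x - v = (V xs - v) + V d := by rw [hx, map_add]; abel
  have sY := norm_add_inner_div_norm_le_norm_add he' (Y d)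
  have sV := norm_add_inner_div_norm_le_norm_add hf' (V d)
  have sN := norm_add_inner_div_norm_le_norm_add hxs d
  have sS := sqrt_norm_sq_add_one_add_inner_div_le xs d
  rw [← hY] at sY
  rw [← hV] at sV
  rw [← hx] at sN sS
  have hslope : ⟪Y xs - r, Y d⟫ / ‖Y xs - r‖ + lk * ρ₁ * (⟪xs, d⟫ / √(‖xs‖ ^ 2 + 1)) +
      ρ₂ * (⟪xs, d⟫ / ‖xs‖) + lk * (⟪V xs - v, V d⟫ / ‖V xs - v‖) = 0 := by
    have hwN : lk * ρ₁ / √(‖xs‖ ^ 2 + 1) + ρ₂ / ‖xs‖ = lg / ‖Y xs - r‖ := by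
      calc _ = (lk * ρ₁ * ‖xs‖ / √(‖xs‖ ^ 2 + 1) + ρ₂) / ‖xs‖ := by field_simp
        _ = lg / ‖Y xs - r‖ := by rw [hρ]; field_simp
    have hwV : lk / ‖V xs - v‖ = lk' / ‖Y xs - r‖ := by
      rw [hlk]; field_simp
    calc _ = ⟪Y xs - r, Y d⟫ / ‖Y xs - r‖
            + (lk * ρ₁ / √(‖xs‖ ^ 2 + 1) + ρ₂ / ‖xs‖) * ⟪xs, d⟫
            + lk / ‖V xs - v‖ * ⟪V xs - v, V d⟫ := by ring
      _ = (⟪Y xs - r, Y d⟫ + lg * ⟪xs, d⟫ + lk' * ⟪V xs - v, V d⟫) / ‖Y xs - r‖ := by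
        rw [hwN, hwV]; ring
      _ = 0 := by rw [hgrad, zero_div]
  unfold normCost
  linarith [mul_le_mul_of_nonneg_left sS (mul_nonneg hlk0 hρ₁),
    mul_le_mul_of_nonneg_left sN hρ₂, mul_le_mul_of_nonneg_left sV hlk0]

end InnerProductSpace

lemma vnorm_eq_norm {n : ℕ} (x : Fin n → ℝ) : vnorm x = ‖WithLp.toLp 2 x‖ := by
  simp [vnorm, EuclideanSpace.norm_eq]

open scoped MatrixOrder in
lemma Matrix.PosSemidef.exists_qnorm_eq_vnorm_mulVec {n : ℕ} {Q : Matrix (Fin n) (Fin n) ℝ}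
    (hQ : Q.PosSemidef) : ∃ S : Matrix (Fin n) (Fin n) ℝ, ∀ x, qnorm Q x = vnorm (S *ᵥ x) := by
  obtain ⟨S, rfl⟩ := CStarAlgebra.nonneg_iff_eq_star_mul_self.mp hQ.nonneg
  refine ⟨S, fun x => ?_⟩
  rw [qnorm, vnorm, ← mulVec_mulVec, dotProduct_mulVec, star_eq_conjTranspose,
    vecMul_conjTranspose, dotProduct]
  simp only [star_trivial, sq]

theorem stmt13_general {p H : ℕ} (Q : Matrix (Fin p) (Fin p) ℝ) (hQ : Q.PosSemidef)
    (Yh : Matrix (Fin p) (Fin H) ℝ) (V : Matrix (Fin H) (Fin H) ℝ)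
    (lg lk' : ℝ) (hlk' : 0 < lk')
    (r : Fin p → ℝ) (v : Fin H → ℝ) (gstar : Fin H → ℝ)
    (hmin : ∀ g : Fin H → ℝ,
      qnorm Q (Yh.mulVec gstar - r) ^ 2 + lg * vnorm gstar ^ 2 +
        lk' * vnorm (V.mulVec gstar - v) ^ 2 ≤
      qnorm Q (Yh.mulVec g - r) ^ 2 + lg * vnorm g ^ 2 + lk' * vnorm (V.mulVec g - v) ^ 2)
    (h2 : V.mulVec gstar ≠ v) (h3 : gstar ≠ 0)
    (lk ρ1 ρ2 : ℝ) (hρ1 : 0 ≤ ρ1) (hρ2 : 0 ≤ ρ2)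
    (hlk : lk = lk' * vnorm (V.mulVec gstar - v) / qnorm Q (Yh.mulVec gstar - r))
    (hρ : lk * ρ1 * vnorm gstar / Real.sqrt (vnorm gstar ^ 2 + 1) + ρ2 =
      lg * vnorm gstar / qnorm Q (Yh.mulVec gstar - r)) :
    ∀ g : Fin H → ℝ,
      qnorm Q (Yh.mulVec gstar - r) + lk * ρ1 * Real.sqrt (vnorm gstar ^ 2 + 1) +
        ρ2 * vnorm gstar + lk * vnorm (V.mulVec gstar - v) ≤
      qnorm Q (Yh.mulVec g - r) + lk * ρ1 * Real.sqrt (vnorm g ^ 2 + 1) +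
        ρ2 * vnorm g + lk * vnorm (V.mulVec g - v) := by
  intro g
  by_cases ha : qnorm Q (Yh *ᵥ gstar - r) = 0
  · -- `Q` may be singular; then `lk` and `ρ2` are forced to be `0` by division by zero.
    rw [ha, div_zero] at hlk hρ
    rw [hlk, zero_mul, zero_mul, zero_div, zero_add] at hρ
    rw [ha, hlk, hρ]
    simp only [zero_mul, add_zero]
    exact Real.sqrt_nonneg _
  obtain ⟨S, hS⟩ := hQ.exists_qnorm_eq_vnorm_mulVec
  set Y' := toLpLin 2 2 (S * Yh)
  set r' := WithLp.toLp 2 (S *ᵥ r)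
  set V' := toLpLin 2 2 V
  set v' := WithLp.toLp 2 v
  have hY : ∀ x, qnorm Q (Yh *ᵥ x - r) = ‖Y' (WithLp.toLp 2 x) - r'‖ := fun x => by
    rw [hS, vnorm_eq_norm, mulVec_sub, mulVec_mulVec]; rfl
  have hV : ∀ x, vnorm (V *ᵥ x - v) = ‖V' (WithLp.toLp 2 x) - v'‖ := fun x => by
    rw [vnorm_eq_norm]; rfl
  simp only [hY, hV, vnorm_eq_norm] at hmin hlk hρ ha ⊢
  have key := normCost_le_of_forall_quadCost_le Y' V' r' v' hlk'.le hρ1 hρ2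
    (fun h => ha (by rw [h, sub_self, norm_zero]))
    (fun h => h2 (congrArg WithLp.ofLp h)) (by simpa using h3) hlk hρ
    (fun x => by simpa [quadCost] using hmin (WithLp.ofLp x)) (WithLp.toLp 2 g)
  simpa only [normCost] using key

/-- Proposition 1 (equivalence, unconstrained case): a minimizer g* of the quadratic cost
c_q also minimizes the original cost c with the matched parameters λ_k, ρ₁, ρ₂. -/
theorem stmt13 {p H : ℕ} (Q : Matrix (Fin p) (Fin p) ℝ) (hQ : Q.PosSemidef)
    (Yh : Matrix (Fin p) (Fin H) ℝ) (V : Matrix (Fin H) (Fin H) ℝ)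
    (lg lk' : ℝ) (hlg : 0 < lg) (hlk' : 0 < lk')
    (r : Fin p → ℝ) (v : Fin H → ℝ) (gstar : Fin H → ℝ)
    (hmin : ∀ g : Fin H → ℝ,
      qnorm Q (Yh.mulVec gstar - r) ^ 2 + lg * vnorm gstar ^ 2 +
        lk' * vnorm (V.mulVec gstar - v) ^ 2 ≤
      qnorm Q (Yh.mulVec g - r) ^ 2 + lg * vnorm g ^ 2 + lk' * vnorm (V.mulVec g - v) ^ 2)
    (h1 : Yh.mulVec gstar ≠ r) (h2 : V.mulVec gstar ≠ v) (h3 : gstar ≠ 0)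
    (lk ρ1 ρ2 : ℝ) (hρ1 : 0 ≤ ρ1) (hρ2 : 0 ≤ ρ2)
    (hlk : lk = lk' * vnorm (V.mulVec gstar - v) / qnorm Q (Yh.mulVec gstar - r))
    (hρ : lk * ρ1 * vnorm gstar / Real.sqrt (vnorm gstar ^ 2 + 1) + ρ2 =
      lg * vnorm gstar / qnorm Q (Yh.mulVec gstar - r)) :
    ∀ g : Fin H → ℝ,
      qnorm Q (Yh.mulVec gstar - r) + lk * ρ1 * Real.sqrt (vnorm gstar ^ 2 + 1) +
        ρ2 * vnorm gstar + lk * vnorm (V.mulVec gstar - v) ≤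
      qnorm Q (Yh.mulVec g - r) + lk * ρ1 * Real.sqrt (vnorm g ^ 2 + 1) +
        ρ2 * vnorm g + lk * vnorm (V.mulVec g - v) :=
  stmt13_general Q hQ Yh V lg lk' hlk' r v gstar hmin h2 h3 lk ρ1 ρ2 hρ1 hρ2 hlk hρ
end
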